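/- If W is a deterministic function of X and also a deterministic function of Y (i.e., W = f(X) = g(Y) almost surely) and X - W - Y is a Markov chain, then I(X,Y;W) = I(X;Y); hence the Wyner common information C(X;Y) equals I(X;Y). -/

import Mathlib

open scoped BigOperators Classical

/-- `p` is a probability distribution on the finite type `A`. -/
def IsDist {A : Type*} [Fintype A] (p : A → ℝ) : Prop :=
  (∀ a, 0 ≤ p a) ∧ ∑ a, p a = 1

/-- The pushforward (distribution of the random variable `f`) of `p` under `f`. -/
noncomputable def push {Om A : Type*} [Fintype Om] (p : Om → ℝ) (f : Om → A) : A → ℝ :=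
  fun a => ∑ om, if f om = a then p om else 0

/-- Shannon entropy `H(f)` of the random variable `f` on the probability space `(Om, p)`. -/
noncomputable def ent {Om A : Type*} [Fintype Om] [Fintype A] (p : Om → ℝ) (f : Om → A) : ℝ :=
  ∑ a, Real.negMulLog (push p f a)

/-- Conditional Shannon entropy `H(f | g)`. -/
noncomputable def condEnt {Om A B : Type*} [Fintype Om] [Fintype A] [Fintype B]
    (p : Om → ℝ) (f : Om → A) (g : Om → B) : ℝ :=
  ent p (fun om => (f om, g om)) - ent p g

/-- Mutual information `I(f ; g)`. -/
noncomputable def mutInfo {Om A B : Type*} [Fintype Om] [Fintype A] [Fintype B]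
    (p : Om → ℝ) (f : Om → A) (g : Om → B) : ℝ :=
  ent p f + ent p g - ent p (fun om => (f om, g om))

/-- Conditional mutual information `I(f ; g | h)`. -/
noncomputable def condMutInfo {Om A B C : Type*} [Fintype Om] [Fintype A] [Fintype B] [Fintype C]
    (p : Om → ℝ) (f : Om → A) (g : Om → B) (h : Om → C) : ℝ :=
  ent p (fun om => (f om, h om)) + ent p (fun om => (g om, h om))
    - ent p (fun om => (f om, g om, h om)) - ent p h

/-! If `W` is almost surely a function of `X` and also of `Y`, then adjoining `W` to `X`, to `Y`
or to `(X, Y)` leaves the entropy unchanged, so the Markov condition `I(X;Y|W) = 0` reads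
`H(X) + H(Y) - H(X,Y) = H(W)`, and both sides equal `I(X,Y;W) = H(W)`. Conversely every `U` with
`I(X;Y|U) = 0` satisfies `I(X;Y) ≤ I(X;Y,U) = I(X;U) ≤ I(X,Y;U)`: the two inequalities are
instances of `I(·;·|·) ≥ 0`, which is Gibbs' inequality `log t ≤ t - 1`, and `I(X;Y)` depends on
the law of `(X, Y)` alone. -/

open Finset

section Push
variable {Om A B : Type*} [Fintype Om]

lemma push_nonneg {p : Om → ℝ} (hp : ∀ om, 0 ≤ p om) (f : Om → A) (a : A) :
    0 ≤ push p f a :=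
  sum_nonneg fun om _ => by split_ifs <;> simp [hp om]

lemma le_push_apply {p : Om → ℝ} (hp : ∀ om, 0 ≤ p om) (f : Om → A) (om : Om) :
    p om ≤ push p f (f om) := by
  simpa [push] using single_le_sum (f := fun om' => if f om' = f om then p om' else 0)
    (fun i _ => by split_ifs <;> simp [hp i]) (mem_univ om)

lemma push_congr_ae {p : Om → ℝ} {u v : Om → A} (h : ∀ om, p om ≠ 0 → u om = v om) :
    push p u = push p v := by
  funext a
  refine sum_congr rfl fun om _ => ?_
  by_cases hom : p om = 0
  · simp [hom]
  · rw [h om hom]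

lemma push_id (p : Om → ℝ) : push p (fun om => om) = p := by
  funext om
  simp [push]

variable [Fintype A]

lemma sum_mul_comp_eq_sum_push (p : Om → ℝ) (f : Om → A) (φ : A → ℝ) :
    ∑ om, p om * φ (f om) = ∑ a, push p f a * φ a := by
  simp only [push, sum_mul, ite_mul, zero_mul]
  rw [sum_comm]
  simp

lemma sum_push (p : Om → ℝ) (f : Om → A) : ∑ a, push p f a = ∑ om, p om := by
  simpa using (sum_mul_comp_eq_sum_push p f fun _ => 1).symm

lemma push_comp (p : Om → ℝ) (f : Om → A) (h : A → B) :
    push p (fun om => h (f om)) = push (push p f) h := by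
  funext b
  simpa [push, mul_ite] using sum_mul_comp_eq_sum_push p f fun a => if h a = b then 1 else 0

lemma sum_push_prod_mk [Fintype B] (p : Om → ℝ) (u : Om → A) (v : Om → B) (b : B) :
    ∑ a, push p (fun om => (u om, v om)) (a, b) = push p v b := by
  rw [push_comp p (fun om => (u om, v om)) Prod.snd]
  simp [push, Fintype.sum_prod_type_right]

end Push

section Entropy
variable {Om A B : Type*} [Fintype Om] [Fintype A] [Fintype B]

lemma ent_congr_ae {p : Om → ℝ} {u v : Om → A} (h : ∀ om, p om ≠ 0 → u om = v om) :
    ent p u = ent p v := by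
  rw [ent, ent, push_congr_ae h]

lemma ent_comp (p : Om → ℝ) (f : Om → A) (h : A → B) :
    ent p (fun om => h (f om)) = ent (push p f) h := by
  rw [ent, ent, push_comp]

lemma ent_comp_of_injective (p : Om → ℝ) (u : Om → A) {e : A → B} (he : Function.Injective e) :
    ent p (fun om => e (u om)) = ent p u := by
  have push_apply : ∀ a, push (push p u) e (e a) = push p u a := fun a => by
    simp [push, he.eq_iff]
  have push_off_range : ∀ b ∉ Set.range e, Real.negMulLog (push (push p u) e b) = 0 := by
    intro b hb
    rw [push, sum_eq_zero fun a _ => if_neg fun hab => hb ⟨a, hab⟩, Real.negMulLog_zero]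
  rw [ent_comp, ent, ent]
  exact (Fintype.sum_of_injective e he _ _ push_off_range fun a => by rw [push_apply]).symm

lemma ent_eq_of_ae_eq_comp_injective {p : Om → ℝ} {v : Om → B} {u : Om → A} {e : A → B}
    (he : Function.Injective e) (h : ∀ om, p om ≠ 0 → v om = e (u om)) :
    ent p v = ent p u :=
  (ent_congr_ae h).trans (ent_comp_of_injective p u he)

lemma sum_mul_log_push (p : Om → ℝ) (u : Om → A) :
    ∑ om, p om * Real.log (push p u (u om)) = -ent p u := by
  rw [sum_mul_comp_eq_sum_push p u fun a => Real.log (push p u a), ent, ← sum_neg_distrib]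
  simp [Real.negMulLog]

lemma ent_pair_eq_of_ae_eq_comp {C : Type*} [Fintype C] {p : Om → ℝ} {x : Om → A} {w : Om → C}
    {f : A → C} (hf : ∀ om, p om ≠ 0 → w om = f (x om)) :
    ent p (fun om => (x om, w om)) = ent p x :=
  ent_eq_of_ae_eq_comp_injective (e := fun a => (a, f a)) (fun _ _ h => congrArg Prod.fst h)
    fun om hom => by rw [hf om hom]

end Entropy

lemma mul_log_sub_mul_log_le {s t : ℝ} (hs : 0 ≤ s) (ht : 0 ≤ t) (hst : s ≠ 0 → 0 < t) :
    s * Real.log t - s * Real.log s ≤ t - s := by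
  rcases hs.eq_or_lt with rfl | hs
  · simpa using ht
  have ht := hst hs.ne'
  have key := Real.log_le_sub_one_of_pos (div_pos ht hs)
  rw [Real.log_div ht.ne' hs.ne'] at key
  calc s * Real.log t - s * Real.log s = s * (Real.log t - Real.log s) := by ring
    _ ≤ s * (t / s - 1) := mul_le_mul_of_nonneg_left key hs.le
    _ = t - s := by field_simp

section Submodularity
variable {A B C : Type*} [Fintype A] [Fintype B] [Fintype C]

lemma condMutInfo_coords_nonneg {s : A × B × C → ℝ} (hs : ∀ t, 0 ≤ s t) :
    0 ≤ condMutInfo s (fun t => t.1) (fun t => t.2.1) (fun t => t.2.2) := by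
  set pAC := push s (fun t => (t.1, t.2.2))
  set pBC := push s (fun t => (t.2.1, t.2.2))
  set pC := push s (fun t => t.2.2)
  -- Gibbs' inequality against the law under which the first two coordinates are
  -- conditionally independent given the third
  set τ : A × B × C → ℝ := fun t => pAC (t.1, t.2.2) * pBC (t.2.1, t.2.2) / pC t.2.2
  have τ_sum : ∑ t, τ t = ∑ t, s t := by
    have fiber : ∀ c, ∑ a, ∑ b, pAC (a, c) * pBC (b, c) / pC c = pC c := fun c => by
      simp_rw [← sum_div, ← mul_sum, ← sum_mul]
      rw [sum_push_prod_mk, sum_push_prod_mk]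
      exact mul_self_div_self (pC c)
    calc ∑ t, τ t = ∑ c, ∑ a, ∑ b, pAC (a, c) * pBC (b, c) / pC c := by
          simp only [τ, Fintype.sum_prod_type]
          exact (sum_congr rfl fun a _ => sum_comm).trans sum_comm
      _ = ∑ t, s t := by simp only [fiber, pC, sum_push]
  have marginals_pos : ∀ t, s t ≠ 0 →
      0 < pAC (t.1, t.2.2) ∧ 0 < pBC (t.2.1, t.2.2) ∧ 0 < pC t.2.2 := fun t ht =>
    have hs_pos := lt_of_le_of_ne (hs t) (Ne.symm ht)
    ⟨hs_pos.trans_le (le_push_apply hs _ t), hs_pos.trans_le (le_push_apply hs _ t),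
      hs_pos.trans_le (le_push_apply hs _ t)⟩
  have log_τ : ∀ t, s t ≠ 0 → Real.log (τ t)
      = Real.log (pAC (t.1, t.2.2)) + Real.log (pBC (t.2.1, t.2.2)) - Real.log (pC t.2.2) := by
    intro t ht
    obtain ⟨hAC, hBC, hC⟩ := marginals_pos t ht
    rw [Real.log_div (mul_pos hAC hBC).ne' hC.ne', Real.log_mul hAC.ne' hBC.ne']
  have cross : ∑ t, s t * Real.log (τ t) = ∑ t, s t * Real.log (pAC (t.1, t.2.2))
      + ∑ t, s t * Real.log (pBC (t.2.1, t.2.2)) - ∑ t, s t * Real.log (pC t.2.2) := by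
    rw [← sum_add_distrib, ← sum_sub_distrib]
    refine sum_congr rfl fun t _ => ?_
    rcases eq_or_ne (s t) 0 with ht | ht
    · simp [ht]
    · rw [log_τ t ht]
      ring
  have joint : ∑ t, s t * Real.log (s t) = -ent s (fun t => (t.1, t.2.1, t.2.2)) := by
    simpa [push_id] using sum_mul_log_push s fun t => t
  have gibbs : ∑ t, (s t * Real.log (τ t) - s t * Real.log (s t)) ≤ ∑ t, (τ t - s t) :=
    sum_le_sum fun t _ => mul_log_sub_mul_log_le (hs t)
      (div_nonneg (mul_nonneg (push_nonneg hs _ _) (push_nonneg hs _ _)) (push_nonneg hs _ _))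
      fun ht => by
        obtain ⟨hAC, hBC, hC⟩ := marginals_pos t ht
        exact div_pos (mul_pos hAC hBC) hC
  rw [sum_sub_distrib, sum_sub_distrib, cross, joint, τ_sum] at gibbs
  rw [condMutInfo]
  linarith [sum_mul_log_push s (fun t => (t.1, t.2.2)),
    sum_mul_log_push s (fun t => (t.2.1, t.2.2)), sum_mul_log_push s (fun t => t.2.2)]

end Submodularity

section MutualInformation
variable {Om A B C : Type*} [Fintype Om] [Fintype A] [Fintype B] [Fintype C]

theorem condMutInfo_nonneg {p : Om → ℝ} (hp : ∀ om, 0 ≤ p om) (a : Om → A) (b : Om → B)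
    (c : Om → C) : 0 ≤ condMutInfo p a b c := by
  simpa only [condMutInfo, ← ent_comp] using
    condMutInfo_coords_nonneg (push_nonneg hp fun om => (a om, b om, c om))

lemma ent_prod_comm (p : Om → ℝ) (a : Om → A) (b : Om → B) :
    ent p (fun om => (b om, a om)) = ent p (fun om => (a om, b om)) :=
  ent_eq_of_ae_eq_comp_injective Prod.swap_injective fun _ _ => rfl

lemma ent_prod_assoc (p : Om → ℝ) (a : Om → A) (b : Om → B) (c : Om → C) :
    ent p (fun om => ((a om, b om), c om)) = ent p (fun om => (a om, b om, c om)) :=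
  ent_eq_of_ae_eq_comp_injective (Equiv.prodAssoc A B C).symm.injective fun _ _ => rfl

lemma ent_prod_swap_right (p : Om → ℝ) (a : Om → A) (b : Om → B) (c : Om → C) :
    ent p (fun om => (a om, c om, b om)) = ent p (fun om => (a om, b om, c om)) :=
  ent_eq_of_ae_eq_comp_injective (Equiv.prodCongr (Equiv.refl A) (Equiv.prodComm B C)).injective
    fun _ _ => rfl

lemma ent_prod_rotate (p : Om → ℝ) (a : Om → A) (b : Om → B) (c : Om → C) :
    ent p (fun om => (b om, c om, a om)) = ent p (fun om => (a om, b om, c om)) :=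
  ent_eq_of_ae_eq_comp_injective
    ((Equiv.prodComm A (B × C)).trans (Equiv.prodAssoc B C A)).injective fun _ _ => rfl

lemma mutInfo_congr_push {Om' : Type*} [Fintype Om'] {p : Om → ℝ} {p' : Om' → ℝ}
    {a : Om → A} {b : Om → B} {a' : Om' → A} {b' : Om' → B}
    (h : push p (fun om => (a om, b om)) = push p' (fun om => (a' om, b' om))) :
    mutInfo p a b = mutInfo p' a' b' := by
  have ha := ent_comp p (fun om => (a om, b om)) Prod.fst
  have hb := ent_comp p (fun om => (a om, b om)) Prod.snd
  have ha' := ent_comp p' (fun om => (a' om, b' om)) Prod.fst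
  have hb' := ent_comp p' (fun om => (a' om, b' om)) Prod.snd
  dsimp only at ha hb ha' hb'
  rw [mutInfo, mutInfo, ha, hb, ha', hb']
  unfold ent
  rw [h]

theorem mutInfo_pair_eq_of_common_function {p : Om → ℝ} {x : Om → A} {y : Om → B} {w : Om → C}
    {f : A → C} {g : B → C} (hf : ∀ om, p om ≠ 0 → w om = f (x om))
    (hg : ∀ om, p om ≠ 0 → w om = g (y om)) (hMarkov : condMutInfo p x y w = 0) :
    mutInfo p (fun om => (x om, y om)) w = mutInfo p x y := by
  have hxw := ent_pair_eq_of_ae_eq_comp hf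
  have hyw := ent_pair_eq_of_ae_eq_comp hg
  have hxyw := ent_pair_eq_of_ae_eq_comp (x := fun om => (x om, y om)) (f := fun xy => f xy.1) hf
  rw [condMutInfo, hxw, hyw, ← ent_prod_assoc, hxyw] at hMarkov
  rw [mutInfo, mutInfo, hxyw]
  linarith

theorem mutInfo_le_mutInfo_pair_of_condMutInfo_eq_zero {p : Om → ℝ} (hp : ∀ om, 0 ≤ p om)
    {x : Om → A} {y : Om → B} {u : Om → C} (hMarkov : condMutInfo p x y u = 0) :
    mutInfo p x y ≤ mutInfo p (fun om => (x om, y om)) u := by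
  have hxuy := condMutInfo_nonneg hp x u y
  have hyux := condMutInfo_nonneg hp y u x
  rw [condMutInfo, ent_prod_swap_right, ent_prod_comm p y u] at hxuy
  rw [condMutInfo, ent_prod_rotate, ent_prod_comm p x y, ent_prod_comm p x u] at hyux
  rw [condMutInfo] at hMarkov
  rw [mutInfo, mutInfo, ent_prod_assoc]
  linarith

end MutualInformation

theorem common_function_achieves_wyner_general {X Y W : Type*} [Fintype X] [Fintype Y] [Fintype W]
    (q : X × Y × W → ℝ) (f : X → W) (g : Y → W)
    (hfg : ∀ om : X × Y × W, q om ≠ 0 → om.2.2 = f om.1 ∧ om.2.2 = g om.2.1)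
    (hMarkov : condMutInfo q (fun om => om.1) (fun om => om.2.1) (fun om => om.2.2) = 0) :
    mutInfo q (fun om => (om.1, om.2.1)) (fun om => om.2.2) =
      mutInfo q (fun om => om.1) (fun om => om.2.1) ∧
    ∀ (n : ℕ) (r : X × Y × Fin n → ℝ), IsDist r →
      (∀ xy : X × Y, push r (fun om => (om.1, om.2.1)) xy
          = push q (fun om => (om.1, om.2.1)) xy) →
      condMutInfo r (fun om => om.1) (fun om => om.2.1) (fun om => om.2.2) = 0 →
      mutInfo q (fun om => om.1) (fun om => om.2.1) ≤
        mutInfo r (fun om => (om.1, om.2.1)) (fun om => om.2.2) := by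
  refine ⟨mutInfo_pair_eq_of_common_function (fun om h => (hfg om h).1)
    (fun om h => (hfg om h).2) hMarkov, fun n r hr hmarg hcmi => ?_⟩
  rw [← mutInfo_congr_push (funext hmarg)]
  exact mutInfo_le_mutInfo_pair_of_condMutInfo_eq_zero hr.1 hcmi

/-- If `W = f(X) = g(Y)` almost surely for deterministic functions `f, g`, and
`X - W - Y` is a Markov chain, then `I(X,Y;W) = I(X;Y)`; hence the Wyner common
information `C(X;Y) = min_{W' : I(X;Y|W')=0} I(X,Y;W')` equals `I(X;Y)`
(the minimum is achieved by `W` and `I(X;Y)` lower bounds every candidate). -/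
theorem common_function_achieves_wyner {X Y W : Type*} [Fintype X] [Fintype Y] [Fintype W]
    (q : X × Y × W → ℝ) (hq : IsDist q) (f : X → W) (g : Y → W)
    (hfg : ∀ om : X × Y × W, q om ≠ 0 → om.2.2 = f om.1 ∧ om.2.2 = g om.2.1)
    (hMarkov : condMutInfo q (fun om => om.1) (fun om => om.2.1) (fun om => om.2.2) = 0) :
    mutInfo q (fun om => (om.1, om.2.1)) (fun om => om.2.2) =
      mutInfo q (fun om => om.1) (fun om => om.2.1) ∧
    ∀ (n : ℕ) (r : X × Y × Fin n → ℝ), IsDist r →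
      (∀ xy : X × Y, push r (fun om => (om.1, om.2.1)) xy
          = push q (fun om => (om.1, om.2.1)) xy) →
      condMutInfo r (fun om => om.1) (fun om => om.2.1) (fun om => om.2.2) = 0 →
      mutInfo q (fun om => om.1) (fun om => om.2.1) ≤
        mutInfo r (fun om => (om.1, om.2.1)) (fun om => om.2.2) :=
  common_function_achieves_wyner_general q f g hfg hMarkov
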